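/- For z a complex variable, the dilated Chebyshev polynomials satisfy: the generalized characteristic polynomials P^m_k of the matrix A^1_{m,m+1}(z,z̄) (case c = 1) are given by P^m_k(z, z̄) = U^m_k(z/3, z̄/3), where U^m_k are the Chebyshev polynomials of the second kind defined by the recursion U^{n+1}_k = 3z·U^n_k − U^n_{k+1} − U^{n−1}_{k−1} with initial data U^0_0 = 1, U^1_0 = 3z, U^1_1 = 3z̄. -/

import Mathlib

/-- The `m × (m+1)` banded Toeplitz matrix `A^c_{m,m+1}(z, z̄)`: main diagonal `z`,
superdiagonal `conj z`, second superdiagonal `conj c`, subdiagonal `c`. -/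
noncomputable def Amc (c z : ℂ) (m : ℕ) : Matrix (Fin m) (Fin (m + 1)) ℂ :=
  Matrix.of fun i j =>
    if (j : ℕ) = (i : ℕ) then z
    else if (j : ℕ) = (i : ℕ) + 1 then (starRingEnd ℂ) z
    else if (j : ℕ) = (i : ℕ) + 2 then (starRingEnd ℂ) c
    else if (i : ℕ) = (j : ℕ) + 1 then c
    else 0

/-- The generalized characteristic polynomial `P^m_k(z, z̄)`: the determinant of the
`m × m` matrix obtained from `A^c_{m,m+1}(z, z̄)` by deleting its `(m−k)`-th column
(columns indexed `0, …, m`), so that `P^m_k` is monic with leading term `z^{m−k} z̄^k`.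
By convention `P^m_k = 0` when `m < 0`, `k < 0` or `k > m`. -/
noncomputable def Pdet (c z : ℂ) (m k : ℤ) : ℂ :=
  if h : 0 ≤ m ∧ 0 ≤ k ∧ k ≤ m then
    ((Amc c z m.toNat).submatrix id
      (Fin.succAbove ⟨(m - k).toNat, by omega⟩)).det
  else 0


open MvPolynomial in
/-- The Chebyshev polynomials of the second kind on the deltoid, as bivariate
polynomials in `(z, z̄)` (variables `X 0 = z`, `X 1 = z̄`), defined by the recursion
`U^{n+1}_k = 3z·U^n_k − U^n_{k+1} − U^{n−1}_{k−1}` (for `0 ≤ k ≤ n`) with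
`U^0_0 = 1`, `U^1_0 = 3z`, `U^1_1 = 3z̄`, conventions `U^n_{−1} = 0`, `U^{n−1}_n = 0`
(all out-of-range values are `0`), and the top entry `U^{n+1}_{n+1}` given by the
conjugate-symmetric relation `U^{n+1}_{n+1} = 3z̄·U^n_n − U^n_{n−1}`. -/
noncomputable def chebU : ℕ → ℤ → MvPolynomial (Fin 2) ℂ
  | 0, k => if k = 0 then 1 else 0
  | 1, k => if k = 0 then C 3 * X 0 else if k = 1 then C 3 * X 1 else 0
  | (n + 2), k =>
      if k < 0 ∨ (n : ℤ) + 2 < k then 0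
      else if k = (n : ℤ) + 2 then
        C 3 * X 1 * chebU (n + 1) ((n : ℤ) + 1) - chebU (n + 1) (n : ℤ)
      else
        C 3 * X 0 * chebU (n + 1) k - chebU (n + 1) (k + 1) - chebU n (k - 1)

/-!
Expanding along the first row gives `P^{n+3}_k = z P^{n+2}_k - z̄ P^{n+1}_k + P^n_k` as long as
the deleted column has index at least `3`, and reversing the order of rows and columns identifies
`P^m_k(z)` with `P^m_{m-k}(z̄)`, which turns this into the mirrored recursion
`P^{n+3}_{k+3} = z̄ P^{n+2}_{k+2} - z P^{n+1}_{k+1} + P^n_k`.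
The dilated Chebyshev polynomials satisfy the conjugate three-term recursion
`z̄ U^{n+1}_k = U^{n+2}_{k+1} + U^{n+1}_{k-1} + U^n_k` besides the defining one, and the two
combine into the same pair of four-term recursions. Every `P^m_k` with `m ≥ 5` is reached by one
of them, and the cases `m ≤ 4` are computed directly.
-/

open Matrix

theorem det_eq_mul_det_submatrix_succ_of_col_zero {R : Type*} [CommRing R] {n : ℕ}
    (M : Matrix (Fin (n + 1)) (Fin (n + 1)) R) (h : ∀ i : Fin n, M i.succ 0 = 0) :
    M.det = M 0 0 * (M.submatrix Fin.succ Fin.succ).det := by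
  rw [det_succ_column_zero, Fin.sum_univ_succ, Finset.sum_eq_zero (fun i _ => by simp [h i])]
  simp

section Entries

variable (c z : ℂ) (n : ℕ)

theorem Amc_succ_succ (i : Fin n) (j : Fin (n + 1)) :
    Amc c z (n + 1) i.succ j.succ = Amc c z n i j := by
  simp [Amc]

theorem Amc_zero_zero : Amc c z (n + 1) 0 0 = z := by simp [Amc]

theorem Amc_zero_one : Amc c z (n + 1) 0 (Fin.succ 0) = starRingEnd ℂ z := by simp [Amc]

theorem Amc_zero_two : Amc c z (n + 2) 0 (Fin.succ (Fin.succ 0)) = starRingEnd ℂ c := by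
  simp only [Amc, of_apply, Fin.val_succ, Fin.val_zero]; norm_num

theorem Amc_zero_succ_succ_succ (j : Fin n) : Amc c z (n + 2) 0 j.succ.succ.succ = 0 := by
  simp [Amc]

theorem Amc_one_zero : Amc c z (n + 2) (Fin.succ 0) 0 = c := by simp [Amc]

theorem Amc_succ_succ_zero (i : Fin n) : Amc c z (n + 2) i.succ.succ 0 = 0 := by simp [Amc]

end Entries

section Toeplitz

variable (c z : ℂ)

theorem det_Amc_submatrix_succ_succAbove_one (n : ℕ) (f : Fin (n + 1)) :
    ((Amc c z (n + 3)).submatrix Fin.succ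
        (f.succ.succ.succ.succAbove ∘ (Fin.succ 0).succAbove)).det
      = c * ((Amc c z (n + 1)).submatrix id f.succ.succAbove).det := by
  set N := (Amc c z (n + 3)).submatrix Fin.succ
    (f.succ.succ.succ.succAbove ∘ (Fin.succ 0).succAbove)
  have shift : N.submatrix Fin.succ Fin.succ = (Amc c z (n + 1)).submatrix id f.succ.succAbove := by
    ext i j
    simp only [N, submatrix_apply, Function.comp_apply, id, Fin.succAbove_zero,
      Fin.succ_succAbove_succ, Amc_succ_succ]
  rw [det_eq_mul_det_submatrix_succ_of_col_zero N fun i => by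
      simp only [N, submatrix_apply, Function.comp_apply, Fin.succ_succAbove_zero,
        Amc_succ_succ_zero],
    shift]
  simp only [N, submatrix_apply, Function.comp_apply, Fin.succ_succAbove_zero, Amc_one_zero]

theorem det_Amc_submatrix_succ_succAbove_two (n : ℕ) (f : Fin (n + 1)) :
    ((Amc c z (n + 3)).submatrix Fin.succ
        (f.succ.succ.succ.succAbove ∘ (Fin.succ (Fin.succ 0)).succAbove)).det
      = c ^ 2 * ((Amc c z n).submatrix id f.succAbove).det := by
  set N := (Amc c z (n + 3)).submatrix Fin.succ
    (f.succ.succ.succ.succAbove ∘ (Fin.succ (Fin.succ 0)).succAbove)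
  have shift : (N.submatrix Fin.succ Fin.succ).submatrix Fin.succ Fin.succ
      = (Amc c z n).submatrix id f.succAbove := by
    ext i j
    simp only [N, submatrix_apply, Function.comp_apply, id, Fin.succAbove_zero,
      Fin.succ_succAbove_succ, Amc_succ_succ]
  rw [det_eq_mul_det_submatrix_succ_of_col_zero N fun i => by
      simp only [N, submatrix_apply, Function.comp_apply, Fin.succ_succAbove_zero,
        Amc_succ_succ_zero],
    det_eq_mul_det_submatrix_succ_of_col_zero _ fun i => by
      simp only [N, submatrix_apply, Function.comp_apply, Fin.succ_succAbove_zero,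
        Fin.succ_succAbove_succ, Amc_succ_succ, Amc_succ_succ_zero],
    shift]
  simp only [N, submatrix_apply, Function.comp_apply, Fin.succ_succAbove_zero,
    Fin.succ_succAbove_succ, Amc_succ_succ, Amc_one_zero]
  ring

theorem det_Amc_submatrix_succAbove_add_three (n : ℕ) (f : Fin (n + 1)) :
    ((Amc c z (n + 3)).submatrix id f.succ.succ.succ.succAbove).det =
      z * ((Amc c z (n + 2)).submatrix id f.succ.succ.succAbove).det
        - starRingEnd ℂ z * c * ((Amc c z (n + 1)).submatrix id f.succ.succAbove).det
        + starRingEnd ℂ c * c ^ 2 * ((Amc c z n).submatrix id f.succAbove).det := by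
  have minor₀ :
      (Amc c z (n + 3)).submatrix Fin.succ (f.succ.succ.succ.succAbove ∘ Fin.succAbove 0) =
        (Amc c z (n + 2)).submatrix id f.succ.succ.succAbove := by
    ext i j
    simp only [submatrix_apply, Function.comp_apply, id, Fin.succAbove_zero,
      Fin.succ_succAbove_succ, Amc_succ_succ]
  rw [det_succ_row_zero, Fin.sum_univ_succ, Fin.sum_univ_succ, Fin.sum_univ_succ,
    Finset.sum_eq_zero fun j _ => ?_]
  · simp only [submatrix_submatrix, Function.id_comp, minor₀,
      det_Amc_submatrix_succ_succAbove_one, det_Amc_submatrix_succ_succAbove_two, submatrix_apply,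
      id, Fin.succ_succAbove_zero, Fin.succ_succAbove_succ, Amc_zero_zero, Amc_zero_one,
      Amc_zero_two, Fin.val_succ, Fin.val_zero]
    ring
  · simp only [submatrix_apply, id, Fin.succ_succAbove_succ, Amc_zero_succ_succ_succ,
      mul_zero, zero_mul]

theorem Amc_rev (n : ℕ) (i : Fin n) (j : Fin (n + 1)) :
    Amc c z n i.rev j.rev = Amc (starRingEnd ℂ c) (starRingEnd ℂ z) n i j := by
  simp only [Amc, of_apply, Fin.val_rev, Complex.conj_conj]
  split_ifs <;> first | rfl | omega

theorem det_Amc_submatrix_succAbove_rev (n : ℕ) (d : Fin (n + 1)) :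
    ((Amc c z n).submatrix id d.succAbove).det =
      ((Amc (starRingEnd ℂ c) (starRingEnd ℂ z) n).submatrix id d.rev.succAbove).det := by
  rw [← det_submatrix_equiv_self Fin.revPerm]
  congr 1
  ext i j
  simp [Fin.succAbove_rev_right, Amc_rev]

theorem Pdet_eq_det {m : ℕ} (d : Fin (m + 1)) {k : ℤ} (h : (d : ℤ) + k = m) :
    Pdet c z m k = ((Amc c z m).submatrix id d.succAbove).det := by
  rw [Pdet, dif_pos (by omega)]
  congr 3
  ext
  simp
  omega

theorem Pdet_eq_zero {m : ℕ} {k : ℤ} (hk : k < 0 ∨ (m : ℤ) < k) : Pdet c z m k = 0 := by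
  rw [Pdet, dif_neg (by omega)]

theorem Pdet_conj (m : ℕ) (k : ℤ) :
    Pdet c z m k = Pdet (starRingEnd ℂ c) (starRingEnd ℂ z) m (m - k) := by
  by_cases hk : 0 ≤ k ∧ k ≤ m
  · lift k to ℕ using hk.1
    rw [Pdet_eq_det c z (⟨m - k, by omega⟩ : Fin (m + 1)) (by push_cast; omega),
      Pdet_eq_det _ _ (Fin.rev ⟨m - k, by omega⟩ : Fin (m + 1)) (by simp; omega),
      det_Amc_submatrix_succAbove_rev]
  · rw [Pdet_eq_zero _ _ (by omega), Pdet_eq_zero _ _ (by omega)]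

theorem Pdet_add_three (n : ℕ) {k : ℤ} (h₀ : 0 ≤ k) (h₁ : k ≤ n) :
    Pdet c z (n + 3 : ℕ) k = z * Pdet c z (n + 2 : ℕ) k
      - starRingEnd ℂ z * c * Pdet c z (n + 1 : ℕ) k
      + starRingEnd ℂ c * c ^ 2 * Pdet c z n k := by
  lift k to ℕ using h₀
  set f : Fin (n + 1) := ⟨n - k, by omega⟩
  rw [Pdet_eq_det c z f.succ.succ.succ (by simp [f]; omega),
    Pdet_eq_det c z f.succ.succ (by simp [f]; omega), Pdet_eq_det c z f.succ (by simp [f]; omega),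
    Pdet_eq_det c z f (by simp [f]; omega), det_Amc_submatrix_succAbove_add_three]

theorem Pdet_add_three_add_three (n : ℕ) {k : ℤ} (h₀ : 0 ≤ k) (h₁ : k ≤ n) :
    Pdet c z (n + 3 : ℕ) (k + 3) = starRingEnd ℂ z * Pdet c z (n + 2 : ℕ) (k + 2)
      - z * starRingEnd ℂ c * Pdet c z (n + 1 : ℕ) (k + 1)
      + c * starRingEnd ℂ c ^ 2 * Pdet c z n k := by
  have h := Pdet_add_three (starRingEnd ℂ c) (starRingEnd ℂ z) n (k := n - k)
    (by omega) (by omega)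
  simp only [Complex.conj_conj] at h
  rw [Pdet_conj c z (n + 3), Pdet_conj c z (n + 2), Pdet_conj c z (n + 1), Pdet_conj c z n]
  rwa [show ((n + 3 : ℕ) : ℤ) - (k + 3) = n - k by push_cast; ring,
    show ((n + 2 : ℕ) : ℤ) - (k + 2) = n - k by push_cast; ring,
    show ((n + 1 : ℕ) : ℤ) - (k + 1) = n - k by push_cast; ring]

end Toeplitz

noncomputable def dilatedChebU (z : ℂ) (m : ℕ) (k : ℤ) : ℂ :=
  MvPolynomial.eval (fun i : Fin 2 => if i = 0 then z / 3 else (starRingEnd ℂ) z / 3) (chebU m k)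

namespace dilatedChebU

variable (z : ℂ)

local notation "u" => dilatedChebU z
local notation "z̄" => starRingEnd ℂ z

theorem eq_zero {m : ℕ} {k : ℤ} (hk : k < 0 ∨ (m : ℤ) < k) : u m k = 0 := by
  match m with
  | 0 => simp [dilatedChebU, chebU, show k ≠ 0 by omega]
  | 1 => simp [dilatedChebU, chebU, show k ≠ 0 by omega, show k ≠ 1 by omega]
  | n + 2 => rw [dilatedChebU, chebU, if_pos (by push_cast at hk; omega), map_zero]

theorem add_two {n : ℕ} {k : ℤ} (h₀ : 0 ≤ k) (h₁ : k ≤ n + 1) :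
    u (n + 2) k = z * u (n + 1) k - u (n + 1) (k + 1) - u n (k - 1) := by
  simp only [dilatedChebU, chebU.eq_3, if_neg (show ¬(k < 0 ∨ (n : ℤ) + 2 < k) by omega),
    if_neg (show k ≠ n + 2 by omega), map_sub, map_mul, MvPolynomial.eval_C, MvPolynomial.eval_X]
  simp only [Fin.isValue, ↓reduceIte]
  ring

theorem succ_self (n : ℕ) : u (n + 1) (n + 1) = z̄ * u n n - u n (n - 1) := by
  match n with
  | 0 => norm_num [dilatedChebU, chebU]; ring
  | n + 1 =>
    simp only [dilatedChebU]
    rw [chebU.eq_3, if_neg (by omega), if_pos (by push_cast; ring)]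
    simp only [map_sub, map_mul, MvPolynomial.eval_C, MvPolynomial.eval_X, Fin.isValue,
      one_ne_zero, ↓reduceIte]
    push_cast
    ring_nf

noncomputable def conjDefect (n : ℕ) (k : ℤ) : ℂ :=
  u (n + 2) (k + 1) - z̄ * u (n + 1) k + u (n + 1) (k - 1) + u n k

theorem conjDefect_succ_self (n : ℕ) : conjDefect z n (n + 1) = 0 := by
  have top := succ_self z (n + 1)
  have zero := eq_zero z (m := n) (k := n + 1) (by omega)
  push_cast at top
  rw [conjDefect]
  linear_combination top + zero

theorem conjDefect_self (n : ℕ) : conjDefect z n n = 0 := by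
  obtain _ | p := n
  · norm_num [conjDefect, dilatedChebU, chebU]; ring
  have r₁ := add_two z (n := p + 1) (k := p + 2) (by omega) (by omega)
  have r₂ := add_two z (n := p) (k := p + 1) (by omega) (by omega)
  have r₃ := add_two z (n := p) (k := p) (by omega) (by omega)
  have t₁ := succ_self z (p + 1)
  have t₂ := succ_self z p
  have zero₁ := eq_zero z (m := p + 2) (k := p + 3) (by omega)
  have zero₂ := eq_zero z (m := p + 1) (k := p + 2) (by omega)
  rw [conjDefect]
  push_cast at r₁ r₂ r₃ t₁ t₂ zero₁ zero₂ ⊢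
  ring_nf at r₁ r₂ r₃ t₁ t₂ zero₁ zero₂ ⊢
  linear_combination r₁ - zero₁ + z * t₁ - z̄ * r₂ + z̄ * zero₂ + r₃ - t₂

/- The defect is built from `u` by a linear, shift-invariant rule, so it inherits the
recursion of `u` wherever all four instances of that recursion are available. -/
theorem conjDefect_add_two {p : ℕ} {k : ℤ} (h₀ : 1 ≤ k) (h₁ : k ≤ p + 1) :
    conjDefect z (p + 2) k
      = z * conjDefect z (p + 1) k - conjDefect z (p + 1) (k + 1) - conjDefect z p (k - 1) := by
  have a := add_two z (n := p + 2) (k := k + 1) (by omega) (by omega)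
  have b := add_two z (n := p + 1) (k := k) (by omega) (by omega)
  have b' := add_two z (n := p + 1) (k := k - 1) (by omega) (by omega)
  have c := add_two z (n := p) (k := k) (by omega) (by omega)
  simp only [conjDefect]
  ring_nf at a b b' c ⊢
  linear_combination a - z̄ * b + b' + c

theorem conjDefect_add_two_zero (p : ℕ) :
    conjDefect z (p + 2) 0 = z * conjDefect z (p + 1) 0 - conjDefect z (p + 1) 1 := by
  have a := add_two z (n := p + 2) (k := 1) (by omega) (by omega)
  have b := add_two z (n := p + 1) (k := 0) le_rfl (by omega)
  have c := add_two z (n := p) (k := 0) le_rfl (by omega)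
  have y₁ := eq_zero z (m := p + 3) (k := -1) (by omega)
  have y₂ := eq_zero z (m := p + 2) (k := -1) (by omega)
  have y₃ := eq_zero z (m := p + 1) (k := -1) (by omega)
  have y₄ := eq_zero z (m := p) (k := -1) (by omega)
  simp only [conjDefect]
  ring_nf at a b c y₁ y₂ y₃ y₄ ⊢
  linear_combination a - z̄ * b + c + y₁ - z * y₂ + z̄ * y₃ - y₄

theorem conjDefect_eq_zero (n : ℕ) {k : ℤ} (h₀ : 0 ≤ k) (h₁ : k ≤ n + 1) :
    conjDefect z n k = 0 := by
  induction n using Nat.strong_induction_on generalizing k with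
  | _ n ih =>
  rcases (show k = n + 1 ∨ k = n ∨ (n = 1 ∧ k = 0) ∨ (2 ≤ n ∧ k = 0) ∨
      (1 ≤ k ∧ k + 1 ≤ n) by omega)
    with rfl | rfl | ⟨rfl, rfl⟩ | ⟨hn, rfl⟩ | ⟨hk, hkn⟩
  · exact conjDefect_succ_self z n
  · exact conjDefect_self z n
  · norm_num [conjDefect, dilatedChebU, chebU]; ring
  · obtain ⟨p, rfl⟩ : ∃ p, n = p + 2 := ⟨n - 2, by omega⟩
    rw [conjDefect_add_two_zero, ih (p + 1) (by omega) le_rfl (by omega),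
      ih (p + 1) (by omega) zero_le_one (by omega)]
    ring
  · obtain ⟨p, rfl⟩ : ∃ p, n = p + 2 := ⟨n - 2, by omega⟩
    rw [conjDefect_add_two z (by omega) (by omega), ih (p + 1) (by omega) (by omega) (by omega),
      ih (p + 1) (by omega) (by omega) (by omega), ih p (by omega) (by omega) (by omega)]
    ring

theorem add_two_add_one (n : ℕ) {k : ℤ} (h₀ : 0 ≤ k) (h₁ : k ≤ n + 1) :
    u (n + 2) (k + 1) = z̄ * u (n + 1) k - u (n + 1) (k - 1) - u n k := by
  have h := conjDefect_eq_zero z n h₀ h₁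
  rw [conjDefect] at h
  linear_combination h

theorem add_three (n : ℕ) {k : ℤ} (h₀ : 0 ≤ k) (h₁ : k ≤ n) :
    u (n + 3) k = z * u (n + 2) k - z̄ * u (n + 1) k + u n k := by
  linear_combination add_two z (n := n + 1) h₀ (by omega) - add_two_add_one z n h₀ (by omega)

theorem add_three_add_three (n : ℕ) {k : ℤ} (h₀ : 0 ≤ k) (h₁ : k ≤ n) :
    u (n + 3) (k + 3) = z̄ * u (n + 2) (k + 2) - z * u (n + 1) (k + 1) + u n k := by
  have conj_rec := add_two_add_one z (n + 1) (k := k + 2) (by omega) (by omega)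
  have z_rec := add_two z (n := n) (k := k + 1) (by omega) (by omega)
  ring_nf at conj_rec z_rec ⊢
  linear_combination conj_rec - z_rec

end dilatedChebU

theorem Pdet_one_eq_dilatedChebU (z : ℂ) (m : ℕ) (k : ℤ) :
    Pdet 1 z m k = dilatedChebU z m k := by
  induction m using Nat.strong_induction_on generalizing k with
  | _ m ih =>
  rcases (show k < 0 ∨ (m : ℤ) < k ∨ (0 ≤ k ∧ k ≤ m ∧ m ≤ 4) ∨
      (0 ≤ k ∧ k + 3 ≤ m) ∨ (3 ≤ k ∧ k ≤ m) by omega)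
    with hk | hk | ⟨h₀, h₁, hm⟩ | ⟨h₀, h₁⟩ | ⟨h₀, h₁⟩
  · rw [Pdet_eq_zero 1 z (.inl hk), dilatedChebU.eq_zero z (.inl hk)]
  · rw [Pdet_eq_zero 1 z (.inr hk), dilatedChebU.eq_zero z (.inr hk)]
  · lift k to ℕ using h₀
    norm_cast at h₁
    interval_cases m <;> interval_cases k <;>
      simp [Pdet, Amc, dilatedChebU, chebU, det_succ_row_zero, Fin.sum_univ_succ,
        Fin.succAbove] <;>
      ring
  · obtain ⟨n, rfl⟩ : ∃ n, m = n + 3 := ⟨m - 3, by omega⟩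
    rw [Pdet_add_three 1 z n h₀ (by omega), dilatedChebU.add_three z n h₀ (by omega),
      ih n (by omega), ih (n + 1) (by omega), ih (n + 2) (by omega)]
    simp
  · obtain ⟨n, rfl⟩ : ∃ n, m = n + 3 := ⟨m - 3, by omega⟩
    obtain ⟨j, rfl⟩ : ∃ j, k = j + 3 := ⟨k - 3, by ring⟩
    rw [Pdet_add_three_add_three 1 z n (by omega) (by omega),
      dilatedChebU.add_three_add_three z n (by omega) (by omega),
      ih n (by omega), ih (n + 1) (by omega), ih (n + 2) (by omega)]
    simp

theorem stmt18_general (z : ℂ) (m k : ℕ) :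
    Pdet 1 z (m : ℤ) (k : ℤ) =
      MvPolynomial.eval
        (fun i : Fin 2 => if i = 0 then z / 3 else (starRingEnd ℂ) z / 3)
        (chebU m (k : ℤ)) :=
  Pdet_one_eq_dilatedChebU z m k

/-- For `c = 1`, the generalized characteristic polynomials of `A¹_{m,m+1}(z, z̄)` are
the dilated Chebyshev polynomials of the second kind:
`P^m_k(z, z̄) = U^m_k(z/3, z̄/3)` for `0 ≤ k ≤ m`. -/
theorem stmt18 (z : ℂ) (m k : ℕ) (hk : k ≤ m) :
    Pdet 1 z (m : ℤ) (k : ℤ) =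
      MvPolynomial.eval
        (fun i : Fin 2 => if i = 0 then z / 3 else (starRingEnd ℂ) z / 3)
        (chebU m (k : ℤ)) :=
  stmt18_general z m k
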